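/- Let α, β ∈ (1,2), let d, e, ρ > 0, fix a point (x,y) and values d₊ = d₊(x,y) > 0, d₋ = d₋(x,y) > 0, e₊, e₋ > 0, and define h(θ₁,θ₂) = d₊ f_α(θ₁) + d₋ f_α(-θ₁) + ρ·(e₊ f_β(θ₂) + e₋ f_β(-θ₂)) and 𝓕(θ₁,θ₂) = d·q_α(θ₁) + e·ρ·q_β(θ₂). Then along the axis θ₂ = 0 one has the one-sided limit lim_{θ₁→0⁺} h(θ₁,0)/𝓕(θ₁,0) = (d₊+d₋)/(2d) − i·tan(απ/2)·(d₊−d₋)/(2d), and symmetrically lim_{θ₂→0⁺} h(0,θ₂)/𝓕(0,θ₂) = (e₊+e₋)/(2e) − i·tan(βπ/2)·(e₊−e₋)/(2e). -/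

import Mathlib

/-
The generating function of the WSGD weights is `(γ/2 + (2-γ)/2 z) (1 - z)^γ` on the closed unit
disc: on the open disc this is the binomial series, and it extends to the boundary because
`∑ |g_k| < ∞` for `0 < γ ≤ 2`. Hence `f_γ(ξ) = -(γ/2 e^{-iξ} + (2-γ)/2) (1 - e^{iξ})^γ`, so
`f_γ(0) = 0` and `f_γ(ξ) / ξ^γ → -(-i)^γ = -cos(γπ/2) + i sin(γπ/2)` as `ξ → 0⁺`.
Since `f_γ(-ξ) = conj f_γ(ξ)`, on each axis `h/𝓕` is a function of `f_γ(ξ)` that is invariant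
under real rescaling and continuous where the real part does not vanish, so its limit is its value
at `-(-i)^γ`.
-/

open scoped Real Topology
open Filter

/-- Alternating fractional binomial coefficients. -/
noncomputable def gcoef (γ : ℝ) (k : ℕ) : ℝ :=
  (-1 : ℝ) ^ k / (Nat.factorial k) * ∏ i ∈ Finset.range k, (γ - i)

/-- WSGD weights. -/
noncomputable def w (γ : ℝ) : ℕ → ℝ
  | 0 => γ / 2 * gcoef γ 0
  | (k + 1) => γ / 2 * gcoef γ (k + 1) + (2 - γ) / 2 * gcoef γ k

/-- The symbol `f_γ(ξ) = -∑_{k=-1}^∞ w_{k+1}^{(γ)} e^{ikξ}`. -/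
noncomputable def fsym (γ : ℝ) (ξ : ℝ) : ℂ :=
  -∑' k : ℕ, (w γ k : ℂ) * Complex.exp (Complex.I * ((k : ℂ) - 1) * (ξ : ℂ))

/-- `q_γ(ξ) = f_γ(ξ) + f_γ(-ξ)` (real-valued). -/
noncomputable def qsym (γ : ℝ) (ξ : ℝ) : ℂ := fsym γ ξ + fsym γ (-ξ)

/-- The variable-coefficient symbol
`h(θ₁,θ₂) = d₊f_α(θ₁) + d₋f_α(−θ₁) + ρ(e₊f_β(θ₂) + e₋f_β(−θ₂))`. -/
noncomputable def hsym (α β ρ dp dm ep em : ℝ) (θ₁ θ₂ : ℝ) : ℂ :=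
  (dp : ℂ) * fsym α θ₁ + (dm : ℂ) * fsym α (-θ₁) +
    (ρ : ℂ) * ((ep : ℂ) * fsym β θ₂ + (em : ℂ) * fsym β (-θ₂))

/-- `𝓕(θ₁,θ₂) = d·q_α(θ₁) + e·ρ·q_β(θ₂)` (real-valued). -/
noncomputable def FsymR (α β d e ρ : ℝ) (θ₁ θ₂ : ℝ) : ℝ :=
  d * (qsym α θ₁).re + e * ρ * (qsym β θ₂).re

open Complex (I)
open scoped ComplexConjugate

lemma gcoef_eq_neg_one_pow_mul_choose (γ : ℝ) (k : ℕ) :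
    gcoef γ k = (-1) ^ k * Ring.choose γ k := by
  rw [Ring.choose_eq_smul, gcoef, ← descPochhammer_eval_eq_prod_range]
  simp only [descPochhammer_eval_eq_ascPochhammer,
    Polynomial.descPochhammer_smeval_eq_ascPochhammer, Polynomial.ascPochhammer_smeval_cast,
    Polynomial.ascPochhammer_smeval_eq_eval, smul_eq_mul]
  ring

@[simp]
lemma gcoef_zero (γ : ℝ) : gcoef γ 0 = 1 := by simp [gcoef]

lemma gcoef_succ (γ : ℝ) (k : ℕ) :
    ((k : ℝ) + 1) * gcoef γ (k + 1) = ((k : ℝ) - γ) * gcoef γ k := by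
  have hk : ((k + 1).factorial : ℝ) = (k + 1) * k.factorial := by
    push_cast [Nat.factorial_succ]; ring
  simp only [gcoef, Finset.prod_range_succ, pow_succ, hk]
  field_simp
  ring

/-- For `k ≥ 2 ≥ γ`, `gcoef_succ` gives `γ |g_k| = k |g_k| - (k + 1) |g_{k+1}|`, which
telescopes. -/
lemma summable_abs_gcoef {γ : ℝ} (hγ0 : 0 < γ) (hγ2 : γ ≤ 2) : Summable fun k ↦ |gcoef γ k| := by
  have step (k : ℕ) : γ * |gcoef γ (k + 2)| =
      (k + 2) * |gcoef γ (k + 2)| - (k + 2 + 1) * |gcoef γ (k + 2 + 1)| := by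
    have h := congrArg abs (gcoef_succ γ (k + 2))
    push_cast at h
    rw [abs_mul, abs_mul, abs_of_nonneg (a := (k : ℝ) + 2 + 1) (by positivity),
      abs_of_nonneg (a := (k : ℝ) + 2 - γ) (by linarith)] at h
    linear_combination h
  have telescope (n : ℕ) : γ * ∑ k ∈ Finset.range n, |gcoef γ (k + 2)| =
      2 * |gcoef γ 2| - (n + 2) * |gcoef γ (n + 2)| := by
    induction n with
    | zero => simp
    | succ n ih =>
      rw [Finset.sum_range_succ, mul_add, ih, step]
      push_cast
      ring_nf
  refine (summable_nat_add_iff 2).1 (summable_of_sum_range_le (c := 2 * |gcoef γ 2| / γ)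
    (fun _ ↦ abs_nonneg _) fun n ↦ ?_)
  rw [le_div_iff₀ hγ0, mul_comm, telescope]
  nlinarith [abs_nonneg (gcoef γ (n + 2))]

lemma hasSum_gcoef_mul_pow_of_norm_lt_one (γ : ℝ) {z : ℂ} (hz : ‖z‖ < 1) :
    HasSum (fun k ↦ (gcoef γ k : ℂ) * z ^ k) ((1 - z) ^ (γ : ℂ)) := by
  have h := (Complex.one_add_cpow_hasFPowerSeriesOnBall_zero (a := γ)).hasSum (y := -z)
    (by simpa [← ofReal_norm] using hz)
  simp only [binomialSeries_apply, List.prod_ofFn, Fin.prod_const, smul_eq_mul, zero_sub,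
    ← sub_eq_add_neg] at h
  refine h.congr_fun fun k ↦ ?_
  rw [gcoef_eq_neg_one_pow_mul_choose, neg_pow]
  push_cast
  ring

/-- Both sides are continuous on the closed unit disc (the series converges uniformly there by
`summable_abs_gcoef`), so the binomial series identity extends from the open disc. -/
lemma hasSum_gcoef_mul_pow {γ : ℝ} (hγ0 : 0 < γ) (hγ2 : γ ≤ 2) {z : ℂ} (hz : ‖z‖ ≤ 1) :
    HasSum (fun k ↦ (gcoef γ k : ℂ) * z ^ k) ((1 - z) ^ (γ : ℂ)) := by
  have hbound (k : ℕ) (x : ℂ) (hx : x ∈ Metric.closedBall 0 1) :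
      ‖(gcoef γ k : ℂ) * x ^ k‖ ≤ |gcoef γ k| := by
    rw [norm_mul, norm_pow, Complex.norm_real, Real.norm_eq_abs]
    exact mul_le_of_le_one_right (abs_nonneg _) (pow_le_one₀ (norm_nonneg _) (by simpa using hx))
  have hseries : ContinuousOn (fun x : ℂ ↦ ∑' k, (gcoef γ k : ℂ) * x ^ k)
      (Metric.closedBall 0 1) :=
    continuousOn_tsum (fun k ↦ by fun_prop) (summable_abs_gcoef hγ0 hγ2) hbound
  have hcpow : ContinuousOn (fun x : ℂ ↦ (1 - x) ^ (γ : ℂ)) (Metric.closedBall 0 1) := by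
    intro x hx
    refine ((Complex.continuousAt_cpow_const_of_re_pos (Or.inl ?_) (by simpa using hγ0)).comp
      (by fun_prop)).continuousWithinAt
    simpa using (Complex.re_le_norm x).trans (by simpa using hx)
  have heq := Set.EqOn.of_subset_closure
    (fun x hx ↦ (hasSum_gcoef_mul_pow_of_norm_lt_one γ (mem_ball_zero_iff.1 hx)).tsum_eq)
    hseries hcpow Metric.ball_subset_closedBall (closure_ball (0 : ℂ) one_ne_zero).ge
  have hmem : z ∈ Metric.closedBall (0 : ℂ) 1 := mem_closedBall_zero_iff.2 hz
  have hvalue : ∑' k, (gcoef γ k : ℂ) * z ^ k = (1 - z) ^ (γ : ℂ) := heq hmem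
  rw [← hvalue]
  exact (Summable.of_norm_bounded (summable_abs_gcoef hγ0 hγ2) (hbound · z hmem)).hasSum

lemma hasSum_w_mul_pow {γ : ℝ} (hγ0 : 0 < γ) (hγ2 : γ ≤ 2) {z : ℂ} (hz : ‖z‖ ≤ 1) :
    HasSum (fun k ↦ (w γ k : ℂ) * z ^ k) ((γ / 2 + (2 - γ) / 2 * z) * (1 - z) ^ (γ : ℂ)) := by
  have hg := hasSum_gcoef_mul_pow hγ0 hγ2 hz
  have hg_succ : HasSum (fun k ↦ (gcoef γ (k + 1) : ℂ) * z ^ (k + 1)) ((1 - z) ^ (γ : ℂ) - 1) := by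
    simpa using (hasSum_nat_add_iff' 1).2 hg
  have h_succ : HasSum (fun k ↦ (w γ (k + 1) : ℂ) * z ^ (k + 1))
      (γ / 2 * ((1 - z) ^ (γ : ℂ) - 1) + (2 - γ) / 2 * z * (1 - z) ^ (γ : ℂ)) :=
    ((hg_succ.mul_left (γ / 2 : ℂ)).add (hg.mul_left ((2 - γ) / 2 * z))).congr_fun fun k ↦ by
      simp only [w]
      push_cast
      ring
  have hvalue : (w γ 0 : ℂ) * z ^ 0 +
      (γ / 2 * ((1 - z) ^ (γ : ℂ) - 1) + (2 - γ) / 2 * z * (1 - z) ^ (γ : ℂ)) =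
      (γ / 2 + (2 - γ) / 2 * z) * (1 - z) ^ (γ : ℂ) := by
    simp only [w, gcoef_zero]
    push_cast
    ring
  rw [← hvalue]
  exact HasSum.zero_add (f := fun k ↦ (w γ k : ℂ) * z ^ k) h_succ

lemma fsym_eq {γ : ℝ} (hγ0 : 0 < γ) (hγ2 : γ ≤ 2) (ξ : ℝ) :
    fsym γ ξ = -((γ / 2 * Complex.exp (-(ξ * I)) + (2 - γ) / 2) *
      (1 - Complex.exp (ξ * I)) ^ (γ : ℂ)) := by
  have hterm (k : ℕ) : (w γ k : ℂ) * Complex.exp (I * (k - 1) * ξ) =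
      Complex.exp (-(ξ * I)) * ((w γ k : ℂ) * Complex.exp (ξ * I) ^ k) := by
    rw [← Complex.exp_nat_mul, mul_left_comm, ← Complex.exp_add]
    ring_nf
  have h := ((hasSum_w_mul_pow hγ0 hγ2 (Complex.norm_exp_ofReal_mul_I ξ).le).mul_left
    (Complex.exp (-(ξ * I)))).congr_fun hterm
  have hinv : Complex.exp (-(ξ * I)) * Complex.exp (ξ * I) = 1 := by
    rw [← Complex.exp_add, neg_add_cancel, Complex.exp_zero]
  rw [fsym, h.tsum_eq, neg_inj]
  linear_combination ((2 - γ) / 2 * (1 - Complex.exp (ξ * I)) ^ (γ : ℂ)) * hinv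

lemma fsym_zero {γ : ℝ} (hγ0 : 0 < γ) (hγ2 : γ ≤ 2) : fsym γ 0 = 0 := by
  simp [fsym_eq hγ0 hγ2, Complex.zero_cpow (Complex.ofReal_ne_zero.2 hγ0.ne')]

lemma fsym_neg (γ ξ : ℝ) : fsym γ (-ξ) = conj (fsym γ ξ) := by
  simp only [fsym, map_neg, Complex.conj_tsum, map_mul, Complex.conj_ofReal, ← Complex.exp_conj]
  congr 2 with k
  simp only [map_sub, Complex.conj_I, map_one, map_natCast, Complex.ofReal_neg]
  ring_nf

lemma ofReal_mul_cpow {r : ℝ} (hr : 0 < r) (z s : ℂ) : ((r : ℂ) * z) ^ s = (r : ℂ) ^ s * z ^ s := by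
  have hr' : (r : ℂ) ≠ 0 := Complex.ofReal_ne_zero.2 hr.ne'
  rcases eq_or_ne z 0 with rfl | hz
  · rcases eq_or_ne s 0 with rfl | hs <;> simp [*]
  rw [Complex.cpow_def_of_ne_zero (mul_ne_zero hr' hz), Complex.log_ofReal_mul hr hz,
    Complex.cpow_def_of_ne_zero hr', Complex.cpow_def_of_ne_zero hz, ← Complex.exp_add,
    Complex.ofReal_log hr.le, add_mul]

lemma tendsto_one_sub_exp_mul_I_div :
    Tendsto (fun ξ : ℝ ↦ (1 - Complex.exp (ξ * I)) / ξ) (𝓝[≠] 0) (𝓝 (-I)) := by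
  have hderiv : HasDerivAt (fun ξ : ℝ ↦ Complex.exp (ξ * I)) I 0 := by
    simpa using ((hasDerivAt_id (0 : ℝ)).ofReal_comp.mul_const I).cexp
  refine (hasDerivAt_iff_tendsto_slope.1 hderiv).neg.congr fun ξ ↦ ?_
  simp [slope, div_eq_inv_mul, ← mul_neg]

lemma tendsto_fsym_div_rpow {γ : ℝ} (hγ0 : 0 < γ) (hγ2 : γ ≤ 2) :
    Tendsto (fun ξ : ℝ ↦ fsym γ ξ / ((ξ ^ γ : ℝ) : ℂ)) (𝓝[>] 0) (𝓝 (-(-I) ^ (γ : ℂ))) := by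
  have hcpow := (continuousAt_cpow_const (b := γ) (by simp [Complex.mem_slitPlane_iff])).tendsto
    |>.comp (tendsto_one_sub_exp_mul_I_div.mono_left (nhdsGT_le_nhdsNE 0))
  have hfactor : Tendsto (fun ξ : ℝ ↦ γ / 2 * Complex.exp (-(ξ * I)) + (2 - γ) / 2) (𝓝[>] 0)
      (𝓝 1) := by
    have : Continuous (fun ξ : ℝ ↦ γ / 2 * Complex.exp (-(ξ * I)) + (2 - γ) / 2) := by fun_prop
    convert this.continuousWithinAt.tendsto using 2
    simp
    ring
  have key := (hfactor.mul hcpow).neg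
  rw [one_mul] at key
  refine key.congr' ?_
  filter_upwards [self_mem_nhdsWithin] with ξ (hξ : 0 < ξ)
  have hsplit : (1 - Complex.exp (ξ * I)) ^ (γ : ℂ) =
      ((ξ ^ γ : ℝ) : ℂ) * ((1 - Complex.exp (ξ * I)) / ξ) ^ (γ : ℂ) := by
    rw [Complex.ofReal_cpow hξ.le, ← ofReal_mul_cpow hξ,
      mul_div_cancel₀ _ (Complex.ofReal_ne_zero.2 hξ.ne')]
  have hpos : ((ξ ^ γ : ℝ) : ℂ) ≠ 0 := Complex.ofReal_ne_zero.2 (Real.rpow_pos_of_pos hξ γ).ne'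
  rw [Function.comp_apply, fsym_eq hγ0 hγ2, hsplit]
  field_simp

lemma neg_I_cpow (γ : ℝ) :
    (-I) ^ (γ : ℂ) = Real.cos (γ * π / 2) - Real.sin (γ * π / 2) * I := by
  rw [Complex.cpow_def_of_ne_zero (neg_ne_zero.2 Complex.I_ne_zero), Complex.log_neg_I,
    show -(π / 2 : ℂ) * I * γ = (-(γ * π / 2) : ℝ) * I by push_cast; ring, Complex.exp_mul_I,
    ← Complex.ofReal_cos, ← Complex.ofReal_sin, Real.cos_neg, Real.sin_neg]
  push_cast
  ring

/-- `h / 𝓕` restricted to a coordinate axis, as a function of `z = f_γ(ξ)`, since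
`f_γ(-ξ) = conj (f_γ(ξ))`. -/
noncomputable def axisRatio (c cp cm : ℝ) (z : ℂ) : ℂ :=
  (cp * z + cm * conj z) / ((c * (z + conj z).re : ℝ) : ℂ)

lemma axisRatio_ofReal_mul (c cp cm : ℝ) {t : ℝ} (ht : t ≠ 0) (z : ℂ) :
    axisRatio c cp cm (t * z) = axisRatio c cp cm z := by
  have hnum : (cp : ℂ) * (t * z) + cm * conj (t * z) = t * (cp * z + cm * conj z) := by
    rw [map_mul, Complex.conj_ofReal]
    ring
  have hden : ((c * (t * z + conj (t * z)).re : ℝ) : ℂ) = t * ((c * (z + conj z).re : ℝ) : ℂ) := by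
    rw [map_mul, Complex.conj_ofReal, ← mul_add, Complex.re_ofReal_mul]
    push_cast
    ring
  rw [axisRatio, axisRatio, hnum, hden, mul_div_mul_left _ _ (Complex.ofReal_ne_zero.2 ht)]

lemma continuousAt_axisRatio (cp cm : ℝ) {c : ℝ} (hc : c ≠ 0) {z : ℂ} (hz : z.re ≠ 0) :
    ContinuousAt (axisRatio c cp cm) z := by
  refine ContinuousAt.div (by fun_prop) (by fun_prop) ?_
  simp [Complex.add_conj, hc, hz]

lemma axisRatio_eq (cp cm : ℝ) {c : ℝ} (hc : c ≠ 0) {z : ℂ} (hz : z.re ≠ 0) :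
    axisRatio c cp cm z = (cp + cm) / (2 * c) + I * ((cp - cm) / (2 * c) * (z.im / z.re)) := by
  have hnum : (cp : ℂ) * z + cm * conj z = (cp + cm) * z.re + (cp - cm) * z.im * I := by
    conv_lhs => rw [← Complex.re_add_im z]
    simp only [map_add, map_mul, Complex.conj_ofReal, Complex.conj_I]
    ring
  have hre : (z.re : ℂ) ≠ 0 := Complex.ofReal_ne_zero.2 hz
  have hc' : (c : ℂ) ≠ 0 := Complex.ofReal_ne_zero.2 hc
  rw [axisRatio, hnum, Complex.add_re, Complex.conj_re]
  push_cast
  field_simp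
  ring

lemma tendsto_axisRatio_fsym {γ : ℝ} (hγ0 : 0 < γ) (hγ2 : γ ≤ 2) (hcos : Real.cos (γ * π / 2) ≠ 0)
    (cp cm : ℝ) {c : ℝ} (hc : c ≠ 0) :
    Tendsto (fun ξ ↦ axisRatio c cp cm (fsym γ ξ)) (𝓝[>] 0)
      (𝓝 ((((cp + cm) / (2 * c) : ℝ) : ℂ) -
        I * ((Real.tan (γ * π / 2) * ((cp - cm) / (2 * c)) : ℝ) : ℂ))) := by
  have hre : (-(-I) ^ (γ : ℂ)).re = -Real.cos (γ * π / 2) := by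
    simp [neg_I_cpow, -Complex.ofReal_cos, -Complex.ofReal_sin]
  have him : (-(-I) ^ (γ : ℂ)).im = Real.sin (γ * π / 2) := by
    simp [neg_I_cpow, -Complex.ofReal_cos, -Complex.ofReal_sin]
  have hre0 : (-(-I) ^ (γ : ℂ)).re ≠ 0 := by simpa [hre] using hcos
  have h := (continuousAt_axisRatio cp cm hc hre0).tendsto.comp (tendsto_fsym_div_rpow hγ0 hγ2)
  rw [axisRatio_eq cp cm hc hre0, hre, him] at h
  convert h.congr' ?_ using 2
  · rw [Real.tan_eq_sin_div_cos]
    push_cast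
    ring
  · filter_upwards [self_mem_nhdsWithin] with ξ (hξ : 0 < ξ)
    rw [Function.comp_apply, div_eq_inv_mul, ← Complex.ofReal_inv,
      axisRatio_ofReal_mul _ _ _ (inv_ne_zero (Real.rpow_pos_of_pos hξ γ).ne')]

theorem hsym_over_Fsym_axis_limits_general (α β d e ρ dp dm ep em : ℝ)
    (hα : α ∈ Set.Ioo (1 : ℝ) 2) (hβ : β ∈ Set.Ioo (1 : ℝ) 2)
    (hd : 0 < d) (he : 0 < e) (hρ : 0 < ρ) :
    Tendsto (fun θ₁ : ℝ =>
        hsym α β ρ dp dm ep em θ₁ 0 / ((FsymR α β d e ρ θ₁ 0 : ℝ) : ℂ))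
      (𝓝[>] (0 : ℝ))
      (𝓝 ((((dp + dm) / (2 * d) : ℝ) : ℂ) -
        Complex.I * ((Real.tan (α * Real.pi / 2) * ((dp - dm) / (2 * d)) : ℝ) : ℂ))) ∧
    Tendsto (fun θ₂ : ℝ =>
        hsym α β ρ dp dm ep em 0 θ₂ / ((FsymR α β d e ρ 0 θ₂ : ℝ) : ℂ))
      (𝓝[>] (0 : ℝ))
      (𝓝 ((((ep + em) / (2 * e) : ℝ) : ℂ) -
        Complex.I * ((Real.tan (β * Real.pi / 2) * ((ep - em) / (2 * e)) : ℝ) : ℂ))) := by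
  obtain ⟨hα1, hα2⟩ := hα
  obtain ⟨hβ1, hβ2⟩ := hβ
  have hcos {γ : ℝ} (h1 : 1 < γ) (h2 : γ < 2) : Real.cos (γ * π / 2) ≠ 0 :=
    (Real.cos_neg_of_pi_div_two_lt_of_lt (by nlinarith [Real.pi_pos])
      (by nlinarith [Real.pi_pos])).ne
  constructor
  · refine (tendsto_axisRatio_fsym (by linarith) hα2.le (hcos hα1 hα2) dp dm hd.ne').congr
      fun ξ ↦ ?_
    simp [axisRatio, hsym, FsymR, qsym, fsym_neg, fsym_zero (by linarith : 0 < β) hβ2.le]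
  · refine (tendsto_axisRatio_fsym (by linarith) hβ2.le (hcos hβ1 hβ2) ep em he.ne').congr
      fun ξ ↦ ?_
    simp only [axisRatio, hsym, FsymR, qsym, fsym_neg, fsym_zero (by linarith : 0 < α) hα2.le,
      mul_zero, neg_zero, zero_add, Complex.zero_re, Complex.ofReal_mul]
    rw [mul_assoc, mul_left_comm (e : ℂ), mul_div_mul_left _ _ (Complex.ofReal_ne_zero.2 hρ.ne')]

/-- One-sided limits of `h/𝓕` along the coordinate axes. -/
theorem hsym_over_Fsym_axis_limits (α β d e ρ dp dm ep em : ℝ)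
    (hα : α ∈ Set.Ioo (1 : ℝ) 2) (hβ : β ∈ Set.Ioo (1 : ℝ) 2)
    (hd : 0 < d) (he : 0 < e) (hρ : 0 < ρ)
    (hdp : 0 < dp) (hdm : 0 < dm) (hep : 0 < ep) (hem : 0 < em) :
    Tendsto (fun θ₁ : ℝ =>
        hsym α β ρ dp dm ep em θ₁ 0 / ((FsymR α β d e ρ θ₁ 0 : ℝ) : ℂ))
      (𝓝[>] (0 : ℝ))
      (𝓝 ((((dp + dm) / (2 * d) : ℝ) : ℂ) -
        Complex.I * ((Real.tan (α * Real.pi / 2) * ((dp - dm) / (2 * d)) : ℝ) : ℂ))) ∧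
    Tendsto (fun θ₂ : ℝ =>
        hsym α β ρ dp dm ep em 0 θ₂ / ((FsymR α β d e ρ 0 θ₂ : ℝ) : ℂ))
      (𝓝[>] (0 : ℝ))
      (𝓝 ((((ep + em) / (2 * e) : ℝ) : ℂ) -
        Complex.I * ((Real.tan (β * Real.pi / 2) * ((ep - em) / (2 * e)) : ℝ) : ℂ))) :=
  hsym_over_Fsym_axis_limits_general α β d e ρ dp dm ep em hα hβ hd he hρ
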